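/- Let A(z) = (1−z²)^{−2} for z in the open unit disc 𝔻. For each real α > 0, the function f_α(z) = (1−z²)^{1/2} ( 1 − α^{−1} log((1+z)/(1−z)) ) (principal branches) is a non-trivial solution of f'' + A f = 0 whose unique zero in 𝔻 is z(α) = (e^α − 1)/(e^α + 1). Moreover, for every ε > 0 there exist 0 < α₁ < α₂ < ∞ such that 0 < ϱ_h(z(α₁), z(α₂)) < ε, where f_{α₁} and f_{α₂} are linearly independent solutions; in particular, the separation constant between zero-sequences of two linearly independent solutions cannot be chosen independently of the solutions. -/

import Mathlib

open Complex Metric Filter Topology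

/-- Pseudo-hyperbolic distance in the unit disc. -/
noncomputable def pseudoHypDist (z w : ℂ) : ℝ :=
  ‖(z - w) / (1 - (starRingEnd ℂ) z * w)‖

/-- Hyperbolic distance in the unit disc. -/
noncomputable def hypDist (z w : ℂ) : ℝ :=
  (1 / 2) * Real.log ((1 + pseudoHypDist z w) / (1 - pseudoHypDist z w))

/-- The coefficient `A(z) = (1−z²)^{−2}`. -/
noncomputable def A18 (z : ℂ) : ℂ := ((1 - z ^ 2) ^ 2)⁻¹

/-- The solution `f_α(z) = (1−z²)^{1/2}(1 − α⁻¹ log((1+z)/(1−z)))` (principal branches). -/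
noncomputable def f18 (α : ℝ) (z : ℂ) : ℂ :=
  (1 - z ^ 2) ^ ((1 : ℂ) / 2) * (1 - (α : ℂ)⁻¹ * Complex.log ((1 + z) / (1 - z)))

/-- The zero `z(α) = (e^α − 1)/(e^α + 1)`. -/
noncomputable def z18 (α : ℝ) : ℂ :=
  (((Real.exp α - 1) / (Real.exp α + 1) : ℝ) : ℂ)

/-!
Write `L(z) = log((1+z)/(1-z)) = 2 artanh z`, so `L' = 2/(1-z²)`. Then
`f_α' = -(z (1 - L/α) + 2/α) / √(1-z²)`, and differentiating once more gives
`f_α'' = -A f_α`. Since `√(1-z²)` has no zeros in the disc, `f_α` vanishes exactly where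
`L = α`, that is at `z(α) = tanh(α/2)`. On the real diameter
`ϱ_h(tanh(a/2), tanh(b/2)) = |b - a|/2`, so the zeros of `f_1` and `f_{1+ε}` are at hyperbolic
distance `ε/2`.
-/

lemma one_sub_sq_mem_slitPlane {z : ℂ} (hz : ‖z‖ < 1) : 1 - z ^ 2 ∈ slitPlane := by
  refine mem_slitPlane_iff.2 (Or.inl ?_)
  have : (z ^ 2).re < 1 := by
    calc (z ^ 2).re ≤ ‖z ^ 2‖ := re_le_norm _
      _ = ‖z‖ ^ 2 := norm_pow z 2
      _ < 1 := by nlinarith [norm_nonneg z]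
  simpa using this

lemma one_add_div_one_sub_mem_slitPlane {z : ℂ} (hz : ‖z‖ < 1) :
    (1 + z) / (1 - z) ∈ slitPlane := by
  have hsub : 1 - z ≠ 0 := by
    intro h
    rw [show z = 1 by linear_combination -h] at hz
    simp at hz
  refine mem_slitPlane_iff.2 (Or.inl ?_)
  have hz2 : ‖z‖ ^ 2 < 1 := by nlinarith [norm_nonneg z]
  rw [Complex.sq_norm, normSq_apply] at hz2
  rw [div_re, ← add_div]
  refine div_pos ?_ (normSq_pos.2 hsub)
  simp only [add_re, sub_re, add_im, sub_im, one_re, one_im]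
  nlinarith

lemma one_sub_sq_cpow_half_ne_zero {z : ℂ} (hz : ‖z‖ < 1) :
    (1 - z ^ 2) ^ ((1 : ℂ) / 2) ≠ 0 :=
  cpow_ne_zero_iff.2 (Or.inl (slitPlane_ne_zero (one_sub_sq_mem_slitPlane hz)))

lemma hasDerivAt_one_sub_sq_cpow_half {z : ℂ} (hz : 1 - z ^ 2 ∈ slitPlane) :
    HasDerivAt (fun z : ℂ => (1 - z ^ 2) ^ ((1 : ℂ) / 2))
      (-z / (1 - z ^ 2) ^ ((1 : ℂ) / 2)) z := by
  have h := ((hasDerivAt_pow 2 z).const_sub 1).cpow_const (c := (1 : ℂ) / 2) hz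
  convert h using 1
  rw [cpow_sub _ _ (slitPlane_ne_zero hz), cpow_one]
  set s := (1 - z ^ 2) ^ ((1 : ℂ) / 2)
  have hs : 1 - z ^ 2 = s ^ 2 := by simp [s]
  have hs0 : s ≠ 0 := cpow_ne_zero_iff.2 (Or.inl (slitPlane_ne_zero hz))
  rw [hs]
  push_cast
  field_simp

lemma hasDerivAt_log_one_add_div_one_sub {z : ℂ} (hz : (1 + z) / (1 - z) ∈ slitPlane) :
    HasDerivAt (fun z : ℂ => log ((1 + z) / (1 - z))) (2 / (1 - z ^ 2)) z := by
  have hsub : 1 - z ≠ 0 := fun h => slitPlane_ne_zero hz (by rw [h, div_zero])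
  have hadd : 1 + z ≠ 0 := fun h => slitPlane_ne_zero hz (by rw [h, zero_div])
  have hq : HasDerivAt (fun z : ℂ => (1 + z) / (1 - z))
      ((1 * (1 - z) - (1 + z) * -1) / (1 - z) ^ 2) z :=
    ((hasDerivAt_id' z).const_add 1).div ((hasDerivAt_id' z).const_sub 1) hsub
  convert hq.clog hz using 1
  rw [show 1 - z ^ 2 = (1 + z) * (1 - z) by ring]
  field_simp
  ring

noncomputable def f18Deriv (α : ℝ) (z : ℂ) : ℂ :=
  -(z * (1 - (α : ℂ)⁻¹ * log ((1 + z) / (1 - z))) + 2 * (α : ℂ)⁻¹) /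
    (1 - z ^ 2) ^ ((1 : ℂ) / 2)

lemma hasDerivAt_f18 (α : ℝ) {z : ℂ} (hz : ‖z‖ < 1) :
    HasDerivAt (f18 α) (f18Deriv α z) z := by
  have hs := hasDerivAt_one_sub_sq_cpow_half (one_sub_sq_mem_slitPlane hz)
  have hL := hasDerivAt_log_one_add_div_one_sub (one_add_div_one_sub_mem_slitPlane hz)
  have h : HasDerivAt (f18 α) _ z := hs.mul ((hL.const_mul (α : ℂ)⁻¹).const_sub 1)
  convert h using 1
  rw [f18Deriv]
  set s := (1 - z ^ 2) ^ ((1 : ℂ) / 2)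
  have hs2 : 1 - z ^ 2 = s ^ 2 := by simp [s]
  have hs0 : s ≠ 0 := one_sub_sq_cpow_half_ne_zero hz
  rw [hs2]
  field_simp
  ring

lemma hasDerivAt_f18Deriv (α : ℝ) {z : ℂ} (hz : ‖z‖ < 1) :
    HasDerivAt (f18Deriv α) (-(A18 z * f18 α z)) z := by
  have hs := hasDerivAt_one_sub_sq_cpow_half (one_sub_sq_mem_slitPlane hz)
  have hL := hasDerivAt_log_one_add_div_one_sub (one_add_div_one_sub_mem_slitPlane hz)
  have hs0 := one_sub_sq_cpow_half_ne_zero hz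
  have hN := (((hasDerivAt_id' z).mul ((hL.const_mul (α : ℂ)⁻¹).const_sub 1)).add_const
    (2 * (α : ℂ)⁻¹)).neg
  have h : HasDerivAt (f18Deriv α) _ z := hN.div hs hs0
  convert h using 1
  simp only [f18, A18, Pi.neg_apply, Pi.mul_apply]
  set s := (1 - z ^ 2) ^ ((1 : ℂ) / 2)
  set L := log ((1 + z) / (1 - z))
  have hs2 : 1 - z ^ 2 = s ^ 2 := by simp [s]
  rw [hs2]
  field_simp
  linear_combination (L * (α : ℂ)⁻¹ - 1) * hs2

lemma deriv_deriv_f18_add_A18_mul (α : ℝ) {z : ℂ} (hz : z ∈ ball (0 : ℂ) 1) :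
    deriv (deriv (f18 α)) z + A18 z * f18 α z = 0 := by
  have hderiv : deriv (f18 α) =ᶠ[𝓝 z] f18Deriv α := by
    filter_upwards [isOpen_ball.mem_nhds hz] with w hw
    exact (hasDerivAt_f18 α (mem_ball_zero_iff.1 hw)).deriv
  rw [hderiv.deriv_eq, (hasDerivAt_f18Deriv α (mem_ball_zero_iff.1 hz)).deriv, neg_add_cancel]

lemma analyticOnNhd_f18 (α : ℝ) : AnalyticOnNhd ℂ (f18 α) (ball 0 1) :=
  DifferentiableOn.analyticOnNhd (fun _ hz =>
    (hasDerivAt_f18 α (mem_ball_zero_iff.1 hz)).differentiableAt.differentiableWithinAt)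
    isOpen_ball

lemma f18_zero (α : ℝ) : f18 α 0 = 1 := by
  simp [f18]

lemma log_eq_ofReal_iff {q : ℂ} (hq : q ≠ 0) (x : ℝ) : log q = x ↔ q = Real.exp x := by
  constructor
  · intro h
    rw [← exp_log hq, h, ofReal_exp]
  · rintro rfl
    rw [← ofReal_log (Real.exp_pos x).le, Real.log_exp]

lemma one_add_div_one_sub_eq_iff {z w : ℂ} (hz : z ≠ 1) (hw : w ≠ -1) :
    (1 + z) / (1 - z) = w ↔ z = (w - 1) / (w + 1) := by
  rw [div_eq_iff (sub_ne_zero.2 hz.symm), eq_div_iff (fun h => hw (by linear_combination h))]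
  constructor <;> intro h <;> linear_combination h

lemma f18_eq_zero_iff {α : ℝ} (hα : α ≠ 0) {z : ℂ} (hz : ‖z‖ < 1) :
    f18 α z = 0 ↔ z = z18 α := by
  have hs0 := one_sub_sq_cpow_half_ne_zero hz
  have hq := slitPlane_ne_zero (one_add_div_one_sub_mem_slitPlane hz)
  have hz1 : z ≠ 1 := by rintro rfl; simp at hz
  have hE : (Real.exp α : ℂ) ≠ -1 := fun h => by
    have := congrArg re h
    simp only [ofReal_re, neg_re, one_re] at this
    linarith [Real.exp_pos α]
  have hαC : (α : ℂ) ≠ 0 := ofReal_ne_zero.2 hα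
  calc f18 α z = 0 ↔ log ((1 + z) / (1 - z)) = α := by
        rw [f18, mul_eq_zero, or_iff_right hs0, sub_eq_zero, eq_comm, inv_mul_eq_one₀ hαC,
          eq_comm]
    _ ↔ z = z18 α := by
        rw [log_eq_ofReal_iff hq, one_add_div_one_sub_eq_iff hz1 hE, z18]
        push_cast
        rfl

lemma norm_z18_lt_one (α : ℝ) : ‖z18 α‖ < 1 := by
  have hE := Real.exp_pos α
  rw [z18, norm_real, Real.norm_eq_abs, abs_lt, lt_div_iff₀ (by linarith),
    div_lt_one (by linarith)]
  constructor <;> linarith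

lemma z18_injective : Function.Injective z18 := by
  intro a b h
  have ha := Real.exp_pos a
  have hb := Real.exp_pos b
  rw [z18, z18, ofReal_inj, div_eq_div_iff (by linarith) (by linarith)] at h
  exact Real.exp_injective (by linarith)

lemma pseudoHypDist_z18 (a b : ℝ) :
    pseudoHypDist (z18 a) (z18 b) = |Real.exp a - Real.exp b| / (Real.exp a + Real.exp b) := by
  have ha : 0 < Real.exp a := Real.exp_pos a
  have hb : 0 < Real.exp b := Real.exp_pos b
  set Ea := Real.exp a
  set Eb := Real.exp b
  have hden : 1 - (Ea - 1) / (Ea + 1) * ((Eb - 1) / (Eb + 1)) =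
      2 * (Ea + Eb) / ((Ea + 1) * (Eb + 1)) := by
    field_simp; ring
  have hnum : (Ea - 1) / (Ea + 1) - (Eb - 1) / (Eb + 1) =
      2 * (Ea - Eb) / ((Ea + 1) * (Eb + 1)) := by
    field_simp; ring
  rw [pseudoHypDist, z18, z18, conj_ofReal, ← ofReal_one, ← ofReal_sub, ← ofReal_mul,
    ← ofReal_sub, ← ofReal_div, norm_real, Real.norm_eq_abs, hden, hnum,
    div_div_div_cancel_right₀ (by positivity), mul_div_mul_left _ _ two_ne_zero, abs_div,
    abs_of_pos (show 0 < Ea + Eb by linarith)]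

lemma hypDist_z18 {a b : ℝ} (hab : a ≤ b) : hypDist (z18 a) (z18 b) = (b - a) / 2 := by
  have hsum : 0 < Real.exp a + Real.exp b := by positivity
  have hplus : 1 + (Real.exp b - Real.exp a) / (Real.exp a + Real.exp b) =
      2 * Real.exp b / (Real.exp a + Real.exp b) := by
    field_simp; ring
  have hminus : 1 - (Real.exp b - Real.exp a) / (Real.exp a + Real.exp b) =
      2 * Real.exp a / (Real.exp a + Real.exp b) := by
    field_simp; ring
  rw [hypDist, pseudoHypDist_z18, abs_sub_comm,
    abs_of_nonneg (sub_nonneg.2 (Real.exp_le_exp.2 hab)), hplus, hminus,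
    div_div_div_cancel_right₀ hsum.ne', mul_div_mul_left _ _ two_ne_zero, ← Real.exp_sub,
    Real.log_exp]
  ring

/-- Both solutions equal `1` at the origin, but only `f18 α₁` vanishes at `z18 α₁`. -/
lemma f18_linearIndependent {α₁ α₂ : ℝ} (h₁ : α₁ ≠ 0) (h₂ : α₂ ≠ 0) (h₁₂ : α₁ ≠ α₂)
    (a b : ℂ) (h : ∀ z ∈ ball (0 : ℂ) 1, a * f18 α₁ z + b * f18 α₂ z = 0) : a = 0 ∧ b = 0 := by
  have hmem : z18 α₁ ∈ ball (0 : ℂ) 1 := mem_ball_zero_iff.2 (norm_z18_lt_one α₁)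
  have hsum : a + b = 0 := by simpa [f18_zero] using h 0 (mem_ball_self one_pos)
  have hb : b = 0 := by
    have hzero : f18 α₁ (z18 α₁) = 0 := (f18_eq_zero_iff h₁ (norm_z18_lt_one α₁)).2 rfl
    have hne : f18 α₂ (z18 α₁) ≠ 0 := fun h0 =>
      h₁₂ (z18_injective ((f18_eq_zero_iff h₂ (norm_z18_lt_one α₁)).1 h0))
    simpa [hzero, hne] using h _ hmem
  exact ⟨by simpa [hb] using hsum, hb⟩

/-- For each `α > 0`, `f_α` is a non-trivial analytic solution of
`f'' + A f = 0` with `A(z) = (1−z²)^{−2}` whose unique zero in `𝔻` is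
`z(α) = (e^α−1)/(e^α+1)`. Moreover, for every `ε > 0` there are `0 < α₁ < α₂` such that
`0 < ϱ_h(z(α₁), z(α₂)) < ε` while `f_{α₁}` and `f_{α₂}` are linearly independent. -/
theorem stmt_18 :
    (∀ α : ℝ, 0 < α →
      AnalyticOnNhd ℂ (f18 α) (ball (0:ℂ) 1) ∧
      (∀ z ∈ ball (0:ℂ) 1, deriv (deriv (f18 α)) z + A18 z * f18 α z = 0) ∧
      ¬ (∀ z ∈ ball (0:ℂ) 1, f18 α z = 0) ∧
      z18 α ∈ ball (0:ℂ) 1 ∧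
      (∀ z ∈ ball (0:ℂ) 1, (f18 α z = 0 ↔ z = z18 α))) ∧
    (∀ ε : ℝ, 0 < ε → ∃ α₁ α₂ : ℝ, 0 < α₁ ∧ α₁ < α₂ ∧
      0 < hypDist (z18 α₁) (z18 α₂) ∧ hypDist (z18 α₁) (z18 α₂) < ε ∧
      (∀ a b : ℂ, (∀ z ∈ ball (0:ℂ) 1, a * f18 α₁ z + b * f18 α₂ z = 0) →
        a = 0 ∧ b = 0)) := by
  refine ⟨fun α hα => ⟨analyticOnNhd_f18 α, fun z hz => deriv_deriv_f18_add_A18_mul α hz,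
    fun h => one_ne_zero ((f18_zero α).symm.trans (h 0 (mem_ball_self one_pos))),
    mem_ball_zero_iff.2 (norm_z18_lt_one α),
    fun z hz => f18_eq_zero_iff hα.ne' (mem_ball_zero_iff.1 hz)⟩, fun ε hε => ?_⟩
  refine ⟨1, 1 + ε, one_pos, by linarith, ?_⟩
  rw [hypDist_z18 (by linarith)]
  exact ⟨by linarith, by linarith,
    f18_linearIndependent one_ne_zero (by linarith) (by linarith)⟩
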